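/- arXiv:0811.3999 — 3 statements merged into one kernel-verified Lean document; each statement's English description precedes it below -/
import Mathlib

section
/- Suppose a ghost-number-zero element Φ of the ghost Fock space satisfies the BRST-extended trace constraint (T^{ml} + Y^{ml})Φ = 0 for all m,l, where Y^{(ml} Y^{ps)} = 0 identically (total symmetrization over four indices of products of two fermionic Y's vanishes). Then the ghost-independent component φ of Φ satisfies the Labastida double-trace constraint T^{(ml} T^{ps)} φ = 0. -/
/-! On `Φ` the constraint reads `T Φ = -Y Φ`; since every `T` commutes with the other `T`'s
and with the `Y`'s, each product `T T'` acts on `Φ` as the corresponding `Y Y'`, so the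
symmetrized double trace of `Φ` equals `Y^{(ml} Y^{ps)} Φ = 0`. Finally `P₀` commutes with the
`T`'s, which transports the identity from `Φ` to `φ = P₀ Φ`. -/

namespace Module.End

variable {R M : Type*} [Semiring R] [AddCommGroup M] [Module R M]

theorem mul_apply_eq_mul_apply_of_apply_eq_neg {t t' y y' : Module.End R M} {x : M}
    (ht : t x = -y x) (ht' : t' x = -y' x) (htt' : Commute t t') (hyt' : Commute y t') :
    (t * t') x = (y * y') x := by
  rw [htt'.eq, mul_apply, ht, map_neg, ← mul_apply, ← hyt'.eq, mul_apply, ht', map_neg,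
    neg_neg, mul_apply]

end Module.End

theorem labastida_double_trace_general
    {V : Type*} [AddCommGroup V] [Module ℝ V] {ι : Type*}
    (T Y : ι → ι → Module.End ℝ V)
    (P0 : Module.End ℝ V)
    (hTT : ∀ m l p s, T m l * T p s = T p s * T m l)
    (hTY : ∀ m l p s, T m l * Y p s = Y p s * T m l)
    (hYY : ∀ m l p s, Y m l * Y p s + Y m p * Y l s + Y m s * Y l p = 0)
    (hP0T : ∀ m l, P0 * T m l = T m l * P0)
    (Φ : V) (hΦ : ∀ m l, (T m l + Y m l) Φ = 0)
    (φ : V) (hφ : φ = P0 Φ) :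
    ∀ m l p s, (T m l * T p s) φ + (T m p * T l s) φ + (T m s * T l p) φ = 0 := by
  intro m l p s
  have hT : ∀ a b, T a b Φ = -Y a b Φ := fun a b => eq_neg_of_add_eq_zero_left (hΦ a b)
  have hTT_eq_YY : ∀ a b c d, (T a b * T c d) Φ = (Y a b * Y c d) Φ := fun a b c d =>
    Module.End.mul_apply_eq_mul_apply_of_apply_eq_neg (hT a b) (hT c d) (hTT a b c d)
      (hTY c d a b).symm
  have hsum : (T m l * T p s + T m p * T l s + T m s * T l p) Φ = 0 := by
    rw [LinearMap.add_apply, LinearMap.add_apply, hTT_eq_YY, hTT_eq_YY, hTT_eq_YY,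
      ← LinearMap.add_apply, ← LinearMap.add_apply, hYY, LinearMap.zero_apply]
  have hP0 : ∀ a b c d, Commute P0 (T a b * T c d) := fun a b c d =>
    Commute.mul_right (hP0T a b) (hP0T c d)
  have hcomm : Commute P0 (T m l * T p s + T m p * T l s + T m s * T l p) :=
    ((hP0 m l p s).add_right (hP0 m p l s)).add_right (hP0 m s l p)
  rw [hφ, ← LinearMap.add_apply, ← LinearMap.add_apply, ← Module.End.mul_apply, ← hcomm.eq,
    Module.End.mul_apply, hsum, map_zero]

/-- If a ghost-number-zero element `Φ` satisfies the BRST-extended trace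
constraint `(T^{ml} + Y^{ml})Φ = 0` for all `m, l`, where the `T`'s and `Y`'s
are symmetric, mutually commute, and the totally symmetrized product
`Y^{(ml} Y^{ps)} = 0` vanishes identically, then the ghost-independent
component `φ = P₀ Φ` (with `P₀` the projection onto the ghost-independent
part, commuting with the `T`'s) satisfies the Labastida double-trace
constraint `T^{(ml} T^{ps)} φ = 0`. -/
theorem labastida_double_trace
    {V : Type*} [AddCommGroup V] [Module ℝ V] {ι : Type*}
    (T Y : ι → ι → Module.End ℝ V)
    (P0 : Module.End ℝ V)
    (hTsymm : ∀ m l, T m l = T l m)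
    (hYsymm : ∀ m l, Y m l = Y l m)
    (hTT : ∀ m l p s, T m l * T p s = T p s * T m l)
    (hTY : ∀ m l p s, T m l * Y p s = Y p s * T m l)
    (hYY : ∀ m l p s, Y m l * Y p s + Y m p * Y l s + Y m s * Y l p = 0)
    (hP0T : ∀ m l, P0 * T m l = T m l * P0)
    (Φ : V) (hΦ : ∀ m l, (T m l + Y m l) Φ = 0)
    (φ : V) (hφ : φ = P0 Φ) :
    ∀ m l p s, (T m l * T p s) φ + (T m p * T l s) φ + (T m s * T l p) φ = 0 :=
  labastida_double_trace_general T Y P0 hTT hTY hYY hP0T Φ hΦ φ hφ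
end

section
/- The fermionic identity: for odd derivations ∂_{c_i}, ∂_{b_i} on an exterior algebra, setting Y^{ml} = ∂_{c_m}∂_{b_l} + ∂_{c_l}∂_{b_m}, the totally symmetrized product over the four indices vanishes identically: Y^{(ml} Y^{ps)} = 0 (symmetrization over m,l,p,s). -/
/-!
Moving every `∂_c` to the left costs one sign per transposition, so
`Y^{ml} Y^{ps} = -∑ ∂_{c_a} ∂_{c_q} ∂_{b_{a'}} ∂_{b_{q'}}`, summed over `a ∈ {m, l}` and
`q ∈ {p, s}`, with `a'`, `q'` the other index of each pair. The twelve terms of the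
symmetrized sum then cancel in pairs that differ by a transposition of two `∂_c`'s or of
two `∂_b`'s.
-/

section

variable {A ι : Type*} [Ring A] {c b : ι → A}

def normalOrdered (c b : ι → A) (i j k l : ι) : A := c i * c j * (b k * b l)

theorem normalOrdered_swap_left (hcc : ∀ i j, c i * c j + c j * c i = 0) (i j k l : ι) :
    normalOrdered c b j i k l = -normalOrdered c b i j k l := by
  unfold normalOrdered
  rw [eq_neg_of_add_eq_zero_right (hcc i j), neg_mul]

theorem normalOrdered_swap_right (hbb : ∀ i j, b i * b j + b j * b i = 0) (i j k l : ι) :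
    normalOrdered c b i j l k = -normalOrdered c b i j k l := by
  unfold normalOrdered
  rw [eq_neg_of_add_eq_zero_right (hbb k l), mul_neg]

theorem mul_mul_mul_eq_neg_normalOrdered (hcb : ∀ i j, c i * b j + b j * c i = 0)
    (i j k l : ι) : c i * b k * (c j * b l) = -normalOrdered c b i j k l := by
  unfold normalOrdered
  linear_combination (norm := noncomm_ring) c i * hcb j k * b l

theorem sym_mul_sym_eq_neg_sum_normalOrdered (hcb : ∀ i j, c i * b j + b j * c i = 0)
    (m l p s : ι) :
    (c m * b l + c l * b m) * (c p * b s + c s * b p) =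
      -(normalOrdered c b m p l s + normalOrdered c b m s l p +
        normalOrdered c b l p m s + normalOrdered c b l s m p) := by
  simp only [add_mul, mul_add, mul_mul_mul_eq_neg_normalOrdered hcb]
  abel

end

/-- Fermionic identity: for odd derivations `∂_{c_i}, ∂_{b_i}` on an exterior
algebra (mutually anticommuting), setting
`Y^{ml} = ∂_{c_m}∂_{b_l} + ∂_{c_l}∂_{b_m}`, the totally symmetrized product
over the four indices vanishes identically: `Y^{(ml} Y^{ps)} = 0`, i.e.
`Y^{ml}Y^{ps} + Y^{mp}Y^{ls} + Y^{ms}Y^{lp} = 0` for all `m, l, p, s`. -/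
theorem fermionic_YY_identity
    {A : Type*} [Ring A] (n : ℕ)
    (dc db : Fin n → A)
    (hdcdc : ∀ i j, dc i * dc j + dc j * dc i = 0)
    (hdbdb : ∀ i j, db i * db j + db j * db i = 0)
    (hdcdb : ∀ i j, dc i * db j + db j * dc i = 0)
    (Y : Fin n → Fin n → A)
    (hY : ∀ m l, Y m l = dc m * db l + dc l * db m) :
    ∀ m l p s, Y m l * Y p s + Y m p * Y l s + Y m s * Y l p = 0 := by
  intro m l p s
  simp only [hY, sym_mul_sym_eq_neg_sum_normalOrdered hdcdb]
  rw [normalOrdered_swap_right hdbdb m p s l, normalOrdered_swap_right hdbdb m s p l,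
    normalOrdered_swap_right hdbdb m l s p, normalOrdered_swap_left hdcdc l p m s,
    normalOrdered_swap_left hdcdc l s m p, normalOrdered_swap_left hdcdc p s m l]
  abel
end

section
/- Consider the operator L = Box − Σ_i D_i D^i + (1/2) Σ_{i,j} D_i D_j T^{ij} on polynomials in x^a and a^a_i, where D_i = a^a_i ∂_{x^a}, D^i = η^{ab} ∂_{a^a_i} ∂_{x^b}, T^{ij} = η^{ab} ∂_{a^a_i} ∂_{a^b_j}. Then for any gauge parameter Λ^i satisfying the Labastida constraint T^{(ij} Λ^{k)} = 0 (symmetrization over i,j,k), the variation δφ = Σ_i D_i Λ^i satisfies L(δφ) = (terms proportional to D_i D_j D_k applied to T^{(ij}Λ^{k)}) = 0; i.e. the Labastida equation Lφ = 0 is invariant under δφ = D_i Λ^i. -/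
/-!
Commuting `T^{ij}` and `D^i` past `D_k` turns `L (D_k Λ^k)` into three kinds of terms: the `Box`
terms cancel, the two kinds of `D D D^i` terms cancel once the commuting `D`'s are relabelled,
and what is left is `½ Σ D_i D_j D_k T^{ij} Λ^k`. As the `D`'s commute, this sum is invariant
under cycling `(i j k)`, so it is a sixth of the sum of `D_i D_j D_k` against the symmetrized
constraint `T^{(ij} Λ^{k)} = 0`.
-/

open Finset

section Semiring

variable {K V ι : Type*} [Semiring K] [AddCommGroup V] [Module K V] [Fintype ι]

theorem apply_sum_eq_of_commutator {A : Module.End K V} {D C : ι → Module.End K V}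
    (hAD : ∀ k, A * D k - D k * A = C k) (Λ : ι → V) :
    A (∑ k, D k (Λ k)) = ∑ k, D k (A (Λ k)) + ∑ k, C k (Λ k) := by
  have hpoint : ∀ k, A (D k (Λ k)) = D k (A (Λ k)) + C k (Λ k) := fun k => by
    rw [← hAD k]
    simp
  simp only [map_sum, hpoint, sum_add_distrib]

variable {D : ι → Module.End K V}

theorem sum_sum_apply_apply_swap (hDD : ∀ i j, D i * D j = D j * D i) (w : ι → ι → V) :
    ∑ i, ∑ j, D i (D j (w j i)) = ∑ i, ∑ j, D i (D j (w i j)) := by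
  rw [sum_comm]
  refine sum_congr rfl fun i _ => sum_congr rfl fun j _ => ?_
  simp only [← Module.End.mul_apply, hDD]

theorem sum_sum_sum_apply_apply_apply_cycle (hDD : ∀ i j, D i * D j = D j * D i)
    (w : ι → ι → ι → V) :
    ∑ i, ∑ j, ∑ k, D i (D j (D k (w j k i))) = ∑ i, ∑ j, ∑ k, D i (D j (D k (w i j k))) := by
  have hcycle : ∀ i j k, D i (D j (D k (w j k i))) = D j (D k (D i (w j k i))) := by
    intro i j k
    simp only [← Module.End.mul_apply]
    rw [← mul_assoc, hDD i j, mul_assoc, hDD i k]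
  rw [sum_comm]
  refine sum_congr rfl fun j _ => ?_
  rw [sum_comm]
  exact sum_congr rfl fun k _ => sum_congr rfl fun i _ => hcycle i j k

end Semiring

theorem sum_sum_sum_apply_apply_apply_eq_zero {K V ι : Type*} [Field K] [CharZero K]
    [AddCommGroup V] [Module K V] [Fintype ι] {D : ι → Module.End K V}
    (hDD : ∀ i j, D i * D j = D j * D i) {w : ι → ι → ι → V}
    (hw : ∀ i j k, w i j k + w j k i + w k i j = 0) :
    ∑ i, ∑ j, ∑ k, D i (D j (D k (w i j k))) = 0 := by
  have hcycle := sum_sum_sum_apply_apply_apply_cycle hDD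
  have h3 : (3 : K) • ∑ i, ∑ j, ∑ k, D i (D j (D k (w i j k)))
      = ∑ i, ∑ j, ∑ k, D i (D j (D k (w i j k + w j k i + w k i j))) := by
    simp only [map_add, sum_add_distrib, hcycle w, hcycle (fun i j k => w k i j)]
    module
  simpa [hw] using h3

theorem labastida_gauge_invariance_general
    {V : Type*} [AddCommGroup V] [Module ℝ V] (n : ℕ)
    (Box : Module.End ℝ V) (D Dup : Fin n → Module.End ℝ V)
    (T : Fin n → Fin n → Module.End ℝ V)
    (hDD : ∀ i j, D i * D j = D j * D i)
    (hDupD : ∀ i j, Dup i * D j - D j * Dup i = if i = j then Box else 0)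
    (hBoxD : ∀ i, Box * D i = D i * Box)
    (hTD : ∀ i j k, T i j * D k - D k * T i j
      = (if i = k then Dup j else 0) + (if j = k then Dup i else 0))
    (L : Module.End ℝ V)
    (hL : L = Box - (∑ i : Fin n, D i * Dup i)
      + (2:ℝ)⁻¹ • ∑ i : Fin n, ∑ j : Fin n, D i * D j * T i j)
    (Λ : Fin n → V)
    (hΛ : ∀ i j k, (T i j) (Λ k) + (T j k) (Λ i) + (T k i) (Λ j) = 0) :
    L (∑ i : Fin n, (D i) (Λ i)) = 0 := by
  have hDupδ : ∀ i, Dup i (∑ k, D k (Λ k)) = ∑ k, D k (Dup i (Λ k)) + Box (Λ i) := fun i => by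
    rw [apply_sum_eq_of_commutator (hDupD i) Λ]
    simp [DFunLike.ite_apply]
  have hTδ : ∀ i j, T i j (∑ k, D k (Λ k))
      = ∑ k, D k (T i j (Λ k)) + (Dup j (Λ i) + Dup i (Λ j)) := fun i j => by
    rw [apply_sum_eq_of_commutator (hTD i j) Λ]
    simp [DFunLike.ite_apply, sum_add_distrib]
  have hBox : Box (∑ i, D i (Λ i)) = ∑ i, D i (Box (Λ i)) := by
    simp only [map_sum, ← Module.End.mul_apply, hBoxD]
  have hDup : ∑ i, D i (Dup i (∑ k, D k (Λ k)))
      = ∑ i, ∑ j, D i (D j (Dup i (Λ j))) + Box (∑ i, D i (Λ i)) := by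
    simp only [hDupδ, map_add, map_sum, sum_add_distrib, hBox]
  have hT : ∑ i, ∑ j, D i (D j (T i j (∑ k, D k (Λ k))))
      = (2 : ℝ) • ∑ i, ∑ j, D i (D j (Dup i (Λ j))) := by
    simp only [hTδ, map_add, map_sum, sum_add_distrib,
      sum_sum_sum_apply_apply_apply_eq_zero hDD (w := fun i j k => T i j (Λ k)) hΛ,
      sum_sum_apply_apply_swap hDD (fun i j => Dup j (Λ i))]
    module
  calc L (∑ i, D i (Λ i))
      = Box (∑ i, D i (Λ i)) - ∑ i, D i (Dup i (∑ k, D k (Λ k)))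
        + (2 : ℝ)⁻¹ • ∑ i, ∑ j, D i (D j (T i j (∑ k, D k (Λ k)))) := by
        simp only [hL, LinearMap.add_apply, LinearMap.sub_apply, LinearMap.smul_apply,
          LinearMap.sum_apply, Module.End.mul_apply]
    _ = 0 := by
      rw [hDup, hT]
      module

/-- Gauge invariance of the Labastida equation.  With
`L = Box − Σ_i D_i D^i + (1/2) Σ_{i,j} D_i D_j T^{ij}` and the commutator
algebra `[D^i, D_j] = δ^i_j Box`, `[T^{ij}, D_k] = δ^i_k D^j + δ^j_k D^i`,
`[Box, D_i] = [Box, D^i] = 0`, `[D_i, D_j] = [D^i, D^j] = 0` (and `T^{ij}`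
symmetric, commuting with `Box` and the `D^k`), any gauge parameter `Λ^i`
satisfying the Labastida constraint `T^{(ij} Λ^{k)} = 0` gives a pure-gauge
variation `δφ = Σ_i D_i Λ^i` with `L(δφ) = 0`. -/
theorem labastida_gauge_invariance
    {V : Type*} [AddCommGroup V] [Module ℝ V] (n : ℕ)
    (Box : Module.End ℝ V) (D Dup : Fin n → Module.End ℝ V)
    (T : Fin n → Fin n → Module.End ℝ V)
    (hDD : ∀ i j, D i * D j = D j * D i)
    (hDupDup : ∀ i j, Dup i * Dup j = Dup j * Dup i)
    (hDupD : ∀ i j, Dup i * D j - D j * Dup i = if i = j then Box else 0)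
    (hBoxD : ∀ i, Box * D i = D i * Box)
    (hBoxDup : ∀ i, Box * Dup i = Dup i * Box)
    (hTsymm : ∀ i j, T i j = T j i)
    (hTBox : ∀ i j, T i j * Box = Box * T i j)
    (hTDup : ∀ i j k, T i j * Dup k = Dup k * T i j)
    (hTD : ∀ i j k, T i j * D k - D k * T i j
      = (if i = k then Dup j else 0) + (if j = k then Dup i else 0))
    (L : Module.End ℝ V)
    (hL : L = Box - (∑ i : Fin n, D i * Dup i)
      + (2:ℝ)⁻¹ • ∑ i : Fin n, ∑ j : Fin n, D i * D j * T i j)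
    (Λ : Fin n → V)
    (hΛ : ∀ i j k, (T i j) (Λ k) + (T j k) (Λ i) + (T k i) (Λ j) = 0) :
    L (∑ i : Fin n, (D i) (Λ i)) = 0 :=
  labastida_gauge_invariance_general n Box D Dup T hDD hDupD hBoxD hTD L hL Λ hΛ
end
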